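/- Let Q be a left quasigroup and {α_i : i ∈ I} a family of congruences with γ = ⋁_{i∈I} α_i (the join in the congruence lattice). Then Dis_γ = ⟨Dis_{α_i} : i ∈ I⟩. -/

import Mathlib

/-! Basic theory of left quasigroups, following the paper. -/

structure LeftQuasigroup (Q : Type*) where
  op : Q → Q → Q
  ld : Q → Q → Q
  op_ld : ∀ x y, op x (ld x y) = y
  ld_op : ∀ x y, ld x (op x y) = y

/-- Orbit relation of a subgroup of permutations. -/
def orbRel {Q : Type*} (N : Subgroup (Equiv.Perm Q)) (x y : Q) : Prop := ∃ h ∈ N, h y = x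

/-- Orbit equivalence relation of a subgroup of permutations. -/
def orbSetoid {Q : Type*} (N : Subgroup (Equiv.Perm Q)) : Setoid Q where
  r := orbRel N
  iseqv := by
    constructor
    · exact fun x => ⟨1, N.one_mem, rfl⟩
    · rintro x y ⟨h, hN, rfl⟩
      exact ⟨h⁻¹, N.inv_mem hN, Equiv.symm_apply_apply h y⟩
    · rintro x y z ⟨h, hN, rfl⟩ ⟨g, gN, rfl⟩
      exact ⟨h * g, N.mul_mem hN gN, rfl⟩

/-- The subgroup of permutations moving every point inside its `α`-class. -/
def kerRel {Q : Type*} (α : Setoid Q) : Subgroup (Equiv.Perm Q) where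
  carrier := {g | ∀ x, α.r (g x) x}
  one_mem' := fun x => α.refl x
  mul_mem' := by
    intro a b ha hb x
    exact α.trans (ha (b x)) (hb x)
  inv_mem' := by
    intro a ha x
    have := ha (a⁻¹ x)
    rw [show a (a⁻¹ x) = x from Equiv.apply_symm_apply a x] at this
    exact α.symm this

/-- Pointwise stabilizer of `x` in `N`. -/
def pstab {Q : Type*} (N : Subgroup (Equiv.Perm Q)) (x : Q) : Subgroup (Equiv.Perm Q) :=
  N ⊓ MulAction.stabilizer (Equiv.Perm Q) x

/-- Meet of a family of setoids. -/
def infSetoid {Q I : Type*} (α : I → Setoid Q) : Setoid Q where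
  r x y := ∀ i, (α i).r x y
  iseqv := ⟨fun x i => (α i).refl x, fun h i => (α i).symm (h i),
    fun h g i => (α i).trans (h i) (g i)⟩

namespace LeftQuasigroup

variable {Q : Type*} (S : LeftQuasigroup Q)

/-- Left translation as a permutation. -/
def L (x : Q) : Equiv.Perm Q := ⟨S.op x, S.ld x, S.ld_op x, S.op_ld x⟩

/-- The left multiplication group. -/
def LMlt : Subgroup (Equiv.Perm Q) := Subgroup.closure (Set.range S.L)

/-- The displacement group relative to a binary relation `r`. -/
def disRel (r : Q → Q → Prop) : Subgroup (Equiv.Perm Q) :=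
  Subgroup.closure {g | ∃ h ∈ S.LMlt, ∃ x y, r x y ∧ g = h * (S.L x * (S.L y)⁻¹) * h⁻¹}

/-- The displacement group. -/
def Dis : Subgroup (Equiv.Perm Q) := S.disRel fun _ _ => True

/-- `Dis^α`. -/
def disUp (α : Setoid Q) : Subgroup (Equiv.Perm Q) := S.Dis ⊓ kerRel α

/-- `LMlt^α`, the kernel of `π_α`. -/
def lmltKer (α : Setoid Q) : Subgroup (Equiv.Perm Q) := S.LMlt ⊓ kerRel α

/-- Congruences of a left quasigroup. -/
structure IsCongruence (α : Setoid Q) : Prop where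
  op_compat : ∀ {x y z w : Q}, α.r x y → α.r z w → α.r (S.op x z) (S.op y w)
  ld_compat : ∀ {x y z w : Q}, α.r x y → α.r z w → α.r (S.ld x z) (S.ld y w)

theorem L_mem_lmlt (x : Q) : S.L x ∈ S.LMlt := Subgroup.subset_closure ⟨x, rfl⟩

theorem disRel_le_lmlt (r : Q → Q → Prop) : S.disRel r ≤ S.LMlt := by
  refine (Subgroup.closure_le _).2 ?_
  rintro g ⟨h, hh, x, y, _, rfl⟩
  exact mul_mem (mul_mem hh (mul_mem (S.L_mem_lmlt x) (inv_mem (S.L_mem_lmlt y)))) (inv_mem hh)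

theorem lmlt_maps {α : Setoid Q} (hα : S.IsCongruence α) {g : Equiv.Perm Q}
    (hg : g ∈ S.LMlt) : ∀ x y, α.r x y → α.r (g x) (g y) := by
  have H : ∀ g ∈ S.LMlt,
      (∀ x y, α.r x y → α.r (g x) (g y)) ∧ (∀ x y, α.r x y → α.r (g⁻¹ x) (g⁻¹ y)) := by
    intro g hg
    induction hg using Subgroup.closure_induction with
    | mem g hgen =>
      obtain ⟨z, rfl⟩ := hgen
      constructor
      · intro x y h; exact hα.op_compat (α.refl z) h
      · intro x y h; exact hα.ld_compat (α.refl z) h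
    | one =>
      constructor <;> intro x y h <;> simpa using h
    | mul a b _ _ ha hb =>
      constructor
      · intro x y h
        exact ha.1 _ _ (hb.1 _ _ h)
      · intro x y h
        have := hb.2 _ _ (ha.2 _ _ h)
        simpa [mul_inv_rev] using this
    | inv a _ ha =>
      refine ⟨ha.2, ?_⟩
      intro x y h
      simpa using ha.1 x y h
  exact (H g hg).1

/-- The blockwise stabilizer `Dis(Q)_{[x]_α}`. -/
def blockStab (α : Setoid Q) (hα : S.IsCongruence α) (x : Q) : Subgroup (Equiv.Perm Q) where
  carrier := {g | g ∈ S.Dis ∧ α.r (g x) x}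
  one_mem' := ⟨S.Dis.one_mem, α.refl x⟩
  mul_mem' := by
    intro a b ha hb
    refine ⟨S.Dis.mul_mem ha.1 hb.1, ?_⟩
    exact α.trans (S.lmlt_maps hα (S.disRel_le_lmlt _ ha.1) _ _ hb.2) ha.2
  inv_mem' := by
    intro a ha
    refine ⟨S.Dis.inv_mem ha.1, ?_⟩
    have h2 := S.lmlt_maps hα (inv_mem (S.disRel_le_lmlt _ ha.1)) _ _ ha.2
    rw [show a⁻¹ (a x) = x from Equiv.symm_apply_apply a x] at h2
    exact α.symm h2

/-- The admissible subgroups `Norm(Q)`. -/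
def Norm : Set (Subgroup (Equiv.Perm Q)) :=
  {N | N ≤ S.LMlt ∧ (∀ h ∈ S.LMlt, ∀ n ∈ N, h * n * h⁻¹ ∈ N) ∧ S.disRel (orbRel N) ≤ N}

/-- Image of a subgroup along the canonical projection `π_α`. -/
def piSub (α : Setoid Q) (N : Subgroup (Equiv.Perm Q)) : Subgroup (Equiv.Perm (Quotient α)) where
  carrier := {k | ∃ h ∈ N, ∀ x : Q, k (Quotient.mk α x) = Quotient.mk α (h x)}
  one_mem' := ⟨1, N.one_mem, fun _ => rfl⟩
  mul_mem' := by
    rintro a b ⟨ha, haN, hae⟩ ⟨hb, hbN, hbe⟩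
    refine ⟨ha * hb, N.mul_mem haN hbN, fun x => ?_⟩
    show a (b (Quotient.mk α x)) = _
    rw [hbe, hae]; rfl
  inv_mem' := by
    rintro a ⟨h, hN, he⟩
    refine ⟨h⁻¹, N.inv_mem hN, fun x => ?_⟩
    have h1 := he (h⁻¹ x)
    rw [show h (h⁻¹ x) = x from Equiv.apply_symm_apply h x] at h1
    rw [← h1]; exact Equiv.symm_apply_apply a _

/-- Preimage of a subgroup along the canonical projection `π_α`. -/
def piPre (α : Setoid Q) (K : Subgroup (Equiv.Perm (Quotient α))) : Subgroup (Equiv.Perm Q) where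
  carrier := {h | h ∈ S.LMlt ∧ ∃ k ∈ K, ∀ x : Q, k (Quotient.mk α x) = Quotient.mk α (h x)}
  one_mem' := ⟨S.LMlt.one_mem, 1, K.one_mem, fun _ => rfl⟩
  mul_mem' := by
    rintro a b ⟨haL, ka, kaK, hae⟩ ⟨hbL, kb, kbK, hbe⟩
    refine ⟨S.LMlt.mul_mem haL hbL, ka * kb, K.mul_mem kaK kbK, fun x => ?_⟩
    show ka (kb (Quotient.mk α x)) = _
    rw [hbe, hae]; rfl
  inv_mem' := by
    rintro a ⟨haL, k, kK, he⟩
    refine ⟨S.LMlt.inv_mem haL, k⁻¹, K.inv_mem kK, fun x => ?_⟩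
    have h1 := he (a⁻¹ x)
    rw [show a (a⁻¹ x) = x from Equiv.apply_symm_apply a x] at h1
    rw [← h1]; exact Equiv.symm_apply_apply k _

/-- Quotient left quasigroup. -/
def quotLQ (α : Setoid Q) (hα : S.IsCongruence α) : LeftQuasigroup (Quotient α) where
  op := Quotient.lift₂ (fun x y => Quotient.mk α (S.op x y))
    (fun _ _ _ _ h1 h2 => Quotient.sound (hα.op_compat h1 h2))
  ld := Quotient.lift₂ (fun x y => Quotient.mk α (S.ld x y))
    (fun _ _ _ _ h1 h2 => Quotient.sound (hα.ld_compat h1 h2))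
  op_ld := fun a b => Quotient.inductionOn₂ a b fun x y => congrArg (Quotient.mk α) (S.op_ld x y)
  ld_op := fun a b => Quotient.inductionOn₂ a b fun x y => congrArg (Quotient.mk α) (S.ld_op x y)

/-- Idempotent left quasigroup. -/
def Idem : Prop := ∀ x : Q, S.op x x = x

/-- Left distributive law (defining quandles among idempotent left quasigroups). -/
def Ldist : Prop := ∀ x y z : Q, S.op x (S.op y z) = S.op (S.op x y) (S.op x z)

/-- A left quasigroup is faithful if the Cayley kernel is trivial. -/
def Faithful : Prop := ∀ x y : Q, (∀ z, S.op x z = S.op y z) → x = y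

/-- Connected: `LMlt` acts transitively. -/
def Connected : Prop := ∀ x y : Q, ∃ h ∈ S.LMlt, h y = x

/-- Semiregular: `Dis` acts with trivial stabilizers. -/
def Semiregular : Prop := ∀ g ∈ S.Dis, ∀ x : Q, g x = x → g = 1

/-- Subalgebras. -/
def IsSubalgebra (A : Set Q) : Prop :=
  ∀ ⦃x⦄, x ∈ A → ∀ ⦃y⦄, y ∈ A → S.op x y ∈ A ∧ S.ld x y ∈ A

/-- The left quasigroup structure on a subalgebra. -/
def subLQ (A : Set Q) (hA : S.IsSubalgebra A) : LeftQuasigroup A where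
  op a b := ⟨S.op a b, (hA a.2 b.2).1⟩
  ld a b := ⟨S.ld a b, (hA a.2 b.2).2⟩
  op_ld a b := Subtype.ext (S.op_ld a b)
  ld_op a b := Subtype.ext (S.ld_op a b)

/-- Superconnected: every subalgebra is connected. -/
def Superconnected : Prop := ∀ (A : Set Q) (hA : S.IsSubalgebra A), (S.subLQ A hA).Connected

/-- Superfaithful: every subalgebra is faithful. -/
def Superfaithful : Prop := ∀ (A : Set Q) (hA : S.IsSubalgebra A), (S.subLQ A hA).Faithful

theorem infCong {I : Type*} {α : I → Setoid Q} (hc : ∀ i, S.IsCongruence (α i)) :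
    S.IsCongruence (infSetoid α) :=
  ⟨fun h1 h2 i => (hc i).op_compat (h1 i) (h2 i),
   fun h1 h2 i => (hc i).ld_compat (h1 i) (h2 i)⟩

end LeftQuasigroup

/-- Terms in the language of left quasigroups in `n` variables. -/
inductive LQTerm : ℕ → Type
  | var : ∀ {n}, Fin n → LQTerm n
  | op : ∀ {n}, LQTerm n → LQTerm n → LQTerm n
  | ld : ∀ {n}, LQTerm n → LQTerm n → LQTerm n

/-- Evaluation of terms. -/
def evalT {Q : Type*} (S : LeftQuasigroup Q) : ∀ {n}, LQTerm n → (Fin n → Q) → Q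
  | _, .var i, v => v i
  | _, .op t s, v => S.op (evalT S t v) (evalT S s v)
  | _, .ld t s, v => S.ld (evalT S t v) (evalT S s v)

/-- The centralizing relation `C(a, b; d)` of commutator theory. -/
def CC {Q : Type*} (S : LeftQuasigroup Q) (a b d : Q → Q → Prop) : Prop :=
  ∀ (n : ℕ) (t : LQTerm (n + 1)) (x y : Q) (z u : Fin n → Q),
    a x y → (∀ i, b (z i) (u i)) →
    d (evalT S t (Fin.cons x z)) (evalT S t (Fin.cons x u)) →
    d (evalT S t (Fin.cons y z)) (evalT S t (Fin.cons y u))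

/-- Nilpotency of length `n` in the sense of commutator theory: the ascending central
series (characterized congruence by congruence) reaches the full congruence at step `n`. -/
def LeftQuasigroup.NilpotentLength {Q : Type*} (S : LeftQuasigroup Q) (n : ℕ) : Prop :=
  ∃ c : ℕ → Setoid Q,
    (∀ k, S.IsCongruence (c k)) ∧
    (∀ x y : Q, (c 0).r x y ↔ x = y) ∧
    (∀ k, ∀ β : Setoid Q, S.IsCongruence β →
      (CC S β.r (fun _ _ => True) (c k).r ↔ β ≤ c (k + 1))) ∧
    (∀ x y : Q, (c n).r x y)


/-! A subgroup `N` contains `Dis_α` exactly when `α` lies below the equivalence relation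
"`h L_x L_y⁻¹ h⁻¹ ∈ N` for all `h ∈ LMlt`". So `α ↦ Dis_α` is the lower adjoint of a Galois
connection between equivalence relations and subgroups, and lower adjoints preserve joins. -/

namespace LeftQuasigroup

variable {Q : Type*} (S : LeftQuasigroup Q)

def disSetoid (N : Subgroup (Equiv.Perm Q)) : Setoid Q where
  r x y := ∀ h ∈ S.LMlt, h * (S.L x * (S.L y)⁻¹) * h⁻¹ ∈ N
  iseqv := by
    refine ⟨fun _ h _ => ?_, fun hxy h hh => ?_, fun hxy hyz h hh => ?_⟩
    · simp [N.one_mem]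
    · simpa [mul_assoc] using N.inv_mem (hxy h hh)
    · simpa [mul_assoc] using N.mul_mem (hxy h hh) (hyz h hh)

theorem disRel_le_iff {α : Setoid Q} {N : Subgroup (Equiv.Perm Q)} :
    S.disRel α.r ≤ N ↔ α ≤ S.disSetoid N := by
  rw [disRel, Subgroup.closure_le, Setoid.le_def]
  constructor
  · exact fun hN x y hxy h hh => hN ⟨h, hh, x, y, hxy, rfl⟩
  · rintro hα g ⟨h, hh, x, y, hxy, rfl⟩
    exact hα hxy h hh

theorem gc_disRel_disSetoid :
    GaloisConnection (fun α : Setoid Q => S.disRel α.r) S.disSetoid :=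
  fun _ _ => S.disRel_le_iff

end LeftQuasigroup

theorem stmt1_general {Q I : Type*} (S : LeftQuasigroup Q) (α : I → Setoid Q) :
    S.disRel (⨆ i, α i : Setoid Q).r = ⨆ i, S.disRel (α i).r :=
  S.gc_disRel_disSetoid.l_iSup

/-- `Dis_{⋁ α_i} = ⟨Dis_{α_i} : i ∈ I⟩`. -/
theorem stmt1 {Q I : Type*} (S : LeftQuasigroup Q) (α : I → Setoid Q)
    (hc : ∀ i, S.IsCongruence (α i)) :
    S.disRel (⨆ i, α i : Setoid Q).r = ⨆ i, S.disRel (α i).r :=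
  stmt1_general S α
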